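/- arXiv:1712.03297 — 3 statements merged into one kernel-verified Lean document; each statement's English description precedes it below -/
import Mathlib

section
/- Let a = (0,0), b = (1,0), o = (1/2,0), and y ≥ 0. If p ∈ ℝ² satisfies |op| > √3/2 + (2/√3)·y, then max(|ap|, |bp|) > 1 + y. -/
/-!
By Apollonius's theorem, `|ap|² + |bp|² = 2 (|op|² + 1/4)`, so the larger of `|ap|, |bp|` has
square at least `|op|² + 1/4`. The threshold `r = √3/2 + (2/√3) y` satisfies
`r² + 1/4 = (1 + y)² + y²/3`, hence `|op| > r` forces `max (|ap|, |bp|)² > (1 + y)²`.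
-/

open EuclideanGeometry

theorem dist_midpoint_sq_add_half_dist_sq_le_max_sq {V P : Type*} [NormedAddCommGroup V]
    [InnerProductSpace ℝ V] [MetricSpace P] [NormedAddTorsor V P] (a b p : P) :
    dist (midpoint ℝ a b) p ^ 2 + (dist a b / 2) ^ 2 ≤ max (dist a p) (dist b p) ^ 2 := by
  have apollonius := dist_sq_add_dist_sq_eq_two_mul_dist_midpoint_sq_add_half_dist_sq p a b
  rw [dist_comm p a, dist_comm p b, dist_comm p] at apollonius
  have ha : dist a p ^ 2 ≤ max (dist a p) (dist b p) ^ 2 :=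
    pow_le_pow_left₀ dist_nonneg (le_max_left _ _) 2
  have hb : dist b p ^ 2 ≤ max (dist a p) (dist b p) ^ 2 :=
    pow_le_pow_left₀ dist_nonneg (le_max_right _ _) 2
  linarith

theorem sq_sqrt_three_div_two_add_add_quarter (y : ℝ) :
    (√3 / 2 + (2 / √3) * y) ^ 2 + 1 / 4 = (1 + y) ^ 2 + y ^ 2 / 3 := by
  have h3 : √3 ^ 2 = 3 := Real.sq_sqrt (by norm_num)
  field_simp
  rw [h3]
  ring

/-- Lemma 3 (case `y ≥ 0`): if `|ab| = 1`, `o` is the midpoint of `ab`, and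
`|op| > √3/2 + (2/√3)·y`, then `max (|ap|, |bp|) > 1 + y`. -/
theorem stmt_5 (a b p : EuclideanSpace ℝ (Fin 2)) (y : ℝ) (hy : 0 ≤ y)
    (hab : dist a b = 1)
    (hp : dist (midpoint ℝ a b) p > Real.sqrt 3 / 2 + (2 / Real.sqrt 3) * y) :
    max (dist a p) (dist b p) > 1 + y := by
  have hmax := dist_midpoint_sq_add_half_dist_sq_le_max_sq a b p
  rw [hab] at hmax
  have hr : (√3 / 2 + (2 / √3) * y) ^ 2 < dist (midpoint ℝ a b) p ^ 2 :=
    pow_lt_pow_left₀ hp (by positivity) two_ne_zero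
  have hsq : (1 + y) ^ 2 < max (dist a p) (dist b p) ^ 2 := by
    linarith [sq_sqrt_three_div_two_add_add_quarter y, sq_nonneg y]
  exact lt_of_pow_lt_pow_left₀ 2 (le_max_of_le_left dist_nonneg) hsq
end

section
/- For all z ∈ [0, 0.2]: 2√(1 + 4z²) / min(4, 2 + √3 + 2z) ≥ √(2 − √3). -/
/-! Since `(2 - √3)(2 + √3) = 1`, one has the identity
`4(1 + 4z²) - (2 - √3)(2 + √3 + 2z)² = (2 - √3)(1 - (4 + 2√3)z)²`,
so `√(2 - √3)(2 + √3 + 2z) ≤ 2√(1 + 4z²)` for every real `z`, with equality at `z = 1 - √3/2`.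
Replacing the denominator by the smaller `min 4 (2 + √3 + 2z)` only increases the ratio. -/

open Real

lemma sq_sqrt_two_sub_sqrt_three_mul_le (z : ℝ) :
    √(2 - √3) ^ 2 * (2 + √3 + 2 * z) ^ 2 ≤ 4 * (1 + 4 * z ^ 2) := by
  have h3 : √3 ^ 2 = 3 := sq_sqrt (by norm_num)
  have h3le : √3 ≤ 2 := by nlinarith [sqrt_nonneg 3]
  rw [sq_sqrt (by linarith)]
  have identity : 4 * (1 + 4 * z ^ 2) - (2 - √3) * (2 + √3 + 2 * z) ^ 2
      = (2 - √3) * (1 - (4 + 2 * √3) * z) ^ 2 := by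
    linear_combination (2 + √3) * (1 + 4 * z ^ 2) * h3
  linarith [mul_nonneg (sub_nonneg.2 h3le) (sq_nonneg (1 - (4 + 2 * √3) * z))]

lemma sqrt_two_sub_sqrt_three_mul_le (z : ℝ) :
    √(2 - √3) * (2 + √3 + 2 * z) ≤ 2 * √(1 + 4 * z ^ 2) := by
  have h : 2 * √(1 + 4 * z ^ 2) = √(4 * (1 + 4 * z ^ 2)) := by
    rw [sqrt_mul (by norm_num), show (4 : ℝ) = 2 ^ 2 by norm_num, sqrt_sq (by norm_num)]
  rw [h]
  refine (le_abs_self _).trans (abs_le_sqrt ?_)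
  rw [mul_pow]
  exact sq_sqrt_two_sub_sqrt_three_mul_le z

theorem stmt_14_general (z : ℝ) (hz0 : 0 ≤ z) :
    2 * Real.sqrt (1 + 4 * z ^ 2) / min 4 (2 + Real.sqrt 3 + 2 * z)
      ≥ Real.sqrt (2 - Real.sqrt 3) := by
  have hmin : 0 < min 4 (2 + √3 + 2 * z) := lt_min (by norm_num) (by positivity)
  rw [ge_iff_le, le_div_iff₀ hmin]
  calc √(2 - √3) * min 4 (2 + √3 + 2 * z)
      ≤ √(2 - √3) * (2 + √3 + 2 * z) := by gcongr; exact min_le_right _ _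
    _ ≤ 2 * √(1 + 4 * z ^ 2) := sqrt_two_sub_sqrt_three_mul_le z

/-- Case 1 (`y ≤ 0`) of the refined analysis:
for `z ∈ [0, 0.2]`, `2√(1 + 4z²) / min(4, 2 + √3 + 2z) ≥ √(2 − √3)`. -/
theorem stmt_14 (z : ℝ) (hz0 : 0 ≤ z) (hz1 : z ≤ 0.2) :
    2 * Real.sqrt (1 + 4 * z ^ 2) / min 4 (2 + Real.sqrt 3 + 2 * z)
      ≥ Real.sqrt (2 - Real.sqrt 3) :=
  stmt_14_general z hz0
end

section
/- For all y, z ∈ [0, 0.2]: max(1 + y, √(1 + 4z²)) / min(2, 1 + √3/2 + z + (2/√3)·y) ≥ (4√3 + 2 − 27^{1/4})/13. -/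
/-!
Write `r = 3^{1/4}`, so that `√3 = r²` and `27^{1/4} = r³`. The numerator is at least `1 + y`
and, by Cauchy–Schwarz, at least the tangent line `(1 + 4 z₀ z) / m` of `√(1 + 4z²)` at the
minimiser `z₀ = (8r - r² - 6)/26`, where `m = √(1 + 4z₀²) = (4 + 8r² - 2r³)/13`; the denominator
is at most `2` and at most the linear function of `(y, z)`. A combination of these four linear
bounds with coefficients in `ℚ(r)` that are positive (checked with `1.3 ≤ r ≤ 1.32`) eliminates
`y` and `z` and leaves exactly `ρ · min ≤ max`, with `ρ = m/2`.
-/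

open Real

theorem one_add_four_mul_le_sqrt_mul_sqrt (a z : ℝ) :
    1 + 4 * a * z ≤ √(1 + 4 * a ^ 2) * √(1 + 4 * z ^ 2) := by
  rw [← sqrt_mul (by positivity)]
  apply le_sqrt_of_sq_le
  nlinarith [sq_nonneg (a - z)]

section FourthRootOfThree

variable {r : ℝ} (hr0 : 0 ≤ r) (hr : r ^ 4 = 3)
include hr0 hr

theorem bounds_of_pow_four_eq_three : 1.3 ≤ r ∧ r ≤ 1.32 := by
  constructor
  · exact le_of_pow_le_pow_left₀ four_ne_zero hr0 (by norm_num [hr])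
  · exact le_of_pow_le_pow_left₀ four_ne_zero (by norm_num) (by norm_num [hr])

theorem sqrt_one_add_four_mul_sq_of_pow_four_eq_three :
    √(1 + 4 * ((8 * r - r ^ 2 - 6) / 26) ^ 2) = (4 + 8 * r ^ 2 - 2 * r ^ 3) / 13 := by
  obtain ⟨hr1, hr2⟩ := bounds_of_pow_four_eq_three hr0 hr
  rw [sqrt_eq_iff_mul_self_eq_of_pos (by nlinarith)]
  linear_combination ((4 : ℝ) / 169 * r ^ 2 - 32 / 169 * r + 63 / 169) * hr

theorem one_add_four_mul_le_mul_sqrt_of_pow_four_eq_three (z : ℝ) :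
    1 + 4 * ((8 * r - r ^ 2 - 6) / 26) * z ≤
      (4 + 8 * r ^ 2 - 2 * r ^ 3) / 13 * √(1 + 4 * z ^ 2) := by
  rw [← sqrt_one_add_four_mul_sq_of_pow_four_eq_three hr0 hr]
  exact one_add_four_mul_le_sqrt_mul_sqrt _ z

theorem rho_mul_min_le_max (y z : ℝ) :
    (4 * r ^ 2 + 2 - r ^ 3) / 13 * min 2 (1 + r ^ 2 / 2 + z + 2 / r ^ 2 * y) ≤
      max (1 + y) √(1 + 4 * z ^ 2) := by
  obtain ⟨hr1, hr2⟩ := bounds_of_pow_four_eq_three hr0 hr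
  set N := max (1 + y) √(1 + 4 * z ^ 2)
  set D := min 2 (1 + r ^ 2 / 2 + z + 2 / r ^ 2 * y)
  have hinv : 2 / r ^ 2 = 2 * r ^ 2 / 3 := by
    rw [div_eq_div_iff (by positivity) three_ne_zero]
    linear_combination -2 * hr
  have hN₁ : 1 + y ≤ N := le_max_left _ _
  have hN₂ : 1 + 4 * ((8 * r - r ^ 2 - 6) / 26) * z ≤ (4 + 8 * r ^ 2 - 2 * r ^ 3) / 13 * N := by
    refine (one_add_four_mul_le_mul_sqrt_of_pow_four_eq_three hr0 hr z).trans ?_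
    exact mul_le_mul_of_nonneg_left (le_max_right _ _) (by nlinarith)
  have hD₁ : D ≤ 2 := min_le_left _ _
  have hD₂ : D ≤ 1 + r ^ 2 / 2 + z + 2 * r ^ 2 / 3 * y := hinv ▸ min_le_right _ _
  have hcert : 13 * N - (4 * r ^ 2 + 2 - r ^ 3) * D =
      (16 - 2 * r - 4 * r ^ 3) * (N - (1 + y)) +
      13 * r / 2 * ((4 + 8 * r ^ 2 - 2 * r ^ 3) / 13 * N - (1 + 4 * ((8 * r - r ^ 2 - 6) / 26) * z)) +
      (2 + 6 * r - 4 * r ^ 2) * (2 - D) +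
      r * (8 * r - 6 - r ^ 2) * (1 + r ^ 2 / 2 + z + 2 * r ^ 2 / 3 * y - D) := by
    linear_combination (N - 4 + r / 2 + (2 * r - 16) / 3 * y) * hr
  have hA : 0 ≤ 16 - 2 * r - 4 * r ^ 3 := by nlinarith
  have hC : 0 ≤ 2 + 6 * r - 4 * r ^ 2 := by nlinarith
  have hE : 0 ≤ r * (8 * r - 6 - r ^ 2) := mul_nonneg hr0 (by nlinarith)
  have := mul_nonneg hA (sub_nonneg.2 hN₁)
  have := mul_nonneg (by positivity : (0 : ℝ) ≤ 13 * r / 2) (sub_nonneg.2 hN₂)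
  have := mul_nonneg hC (sub_nonneg.2 hD₁)
  have := mul_nonneg hE (sub_nonneg.2 hD₂)
  linarith

end FourthRootOfThree

theorem stmt_15_general (y z : ℝ) (hy0 : 0 ≤ y) (hz0 : 0 ≤ z) :
    max (1 + y) (Real.sqrt (1 + 4 * z ^ 2)) /
        min 2 (1 + Real.sqrt 3 / 2 + z + (2 / Real.sqrt 3) * y)
      ≥ (4 * Real.sqrt 3 + 2 - (27 : ℝ) ^ ((1 : ℝ) / 4)) / 13 := by
  set r : ℝ := 3 ^ (4⁻¹ : ℝ)
  have hr0 : 0 ≤ r := by positivity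
  have hr : r ^ 4 = 3 := rpow_inv_natCast_pow (by norm_num) four_ne_zero
  have hsqrt : √3 = r ^ 2 := by
    rw [sqrt_eq_iff_mul_self_eq_of_pos (by positivity)]
    linear_combination hr
  have hroot : (27 : ℝ) ^ ((1 : ℝ) / 4) = r ^ 3 := by
    rw [one_div, show (27 : ℝ) = (r ^ 3) ^ 4 by linear_combination -(r ^ 8 + 3 * r ^ 4 + 9) * hr]
    exact pow_rpow_inv_natCast (by positivity) four_ne_zero
  rw [hsqrt, hroot, ge_iff_le, le_div_iff₀ (lt_min two_pos (by positivity))]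
  exact rho_mul_min_le_max hr0 hr y z

/-- Case 2 (`y ≥ 0`) of the refined analysis: for `y, z ∈ [0, 0.2]`,
`max(1 + y, √(1 + 4z²)) / min(2, 1 + √3/2 + z + (2/√3) y) ≥ (4√3 + 2 − 27^{1/4})/13`. -/
theorem stmt_15 (y z : ℝ) (hy0 : 0 ≤ y) (hy1 : y ≤ 0.2) (hz0 : 0 ≤ z) (hz1 : z ≤ 0.2) :
    max (1 + y) (Real.sqrt (1 + 4 * z ^ 2)) /
        min 2 (1 + Real.sqrt 3 / 2 + z + (2 / Real.sqrt 3) * y)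
      ≥ (4 * Real.sqrt 3 + 2 - (27 : ℝ) ^ ((1 : ℝ) / 4)) / 13 :=
  stmt_15_general y z hy0 hz0
end
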